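/- arXiv:0907.5302 — 4 statements merged into one kernel-verified Lean document; each statement's English description precedes it below -/
import Mathlib

section
/- Let K ≥ 1 be a real number, let (μ_n) be a sequence of Borel probability measures on the interval [0, K] converging weakly to a Borel probability measure μ on [0, K], and suppose that for every n the limit c(μ_n) := lim_{ε→0⁺} ∫_{(ε,K]} log λ dμ_n(λ) exists and satisfies c(μ_n) ≥ 0. Then lim_{n→∞} μ_n({0}) = μ({0}). -/
/-!
Pairing with the continuous `tent δ` turns weak convergence into convergence of
`∫ tent δ dμₙ`, which differs from the atom `μₙ({0})` by at most `μₙ((0, δ])`. Splitting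
`∫_{(ε,K]} log` at `δ` shows that `c(μₙ) ≥ 0` forces `μₙ((0, δ]) · log (1/δ) ≤ log K`, so this
error tends to `0` as `δ → 0⁺` uniformly in `n`; for the limit measure it tends to `0` by
continuity from above. Hence the limits `n → ∞` and `δ → 0⁺` may be exchanged (Moore–Osgood).
-/

open MeasureTheory Filter Set Real Topology

theorem measureReal_restrict_singleton_of_mem {α : Type*} [MeasurableSpace α]
    [MeasurableSingletonClass α] (m : Measure α) {s : Set α} {a : α} (ha : a ∈ s) :
    (m.restrict s).real {a} = m.real {a} := by
  rw [measureReal_restrict_apply (measurableSet_singleton a), singleton_inter_of_mem ha]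

noncomputable def tent (δ x : ℝ) : ℝ := max 0 (1 - |x| / δ)

section Tent

variable {δ : ℝ}

theorem continuous_tent (δ : ℝ) : Continuous (tent δ) := by
  unfold tent
  fun_prop

theorem tent_nonneg (x : ℝ) : 0 ≤ tent δ x := le_max_left _ _

theorem tent_le_one (hδ : 0 ≤ δ) (x : ℝ) : tent δ x ≤ 1 :=
  max_le zero_le_one (by linarith [div_nonneg (abs_nonneg x) hδ])

theorem indicator_singleton_le_tent (x : ℝ) :
    ({0} : Set ℝ).indicator 1 x ≤ tent δ x := by
  by_cases hx : x = 0 <;> simp [hx, tent]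

theorem tent_le_indicator_Icc (hδ : 0 < δ) (x : ℝ) :
    tent δ x ≤ (Icc (-δ) δ).indicator 1 x := by
  by_cases hx : x ∈ Icc (-δ) δ
  · simpa only [indicator_of_mem hx, Pi.one_apply] using tent_le_one hδ.le x
  · have : δ < |x| := by
      rw [mem_Icc, ← abs_le] at hx
      exact not_le.1 hx
    simp only [indicator_of_notMem hx, tent]
    exact max_le le_rfl (by linarith [(one_lt_div hδ).2 this])

variable (m : Measure ℝ) [IsFiniteMeasure m]

theorem integrable_tent (hδ : 0 ≤ δ) : Integrable (tent δ) m :=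
  (integrable_const 1).mono' (continuous_tent δ).aestronglyMeasurable <| ae_of_all _ fun x => by
    rw [Real.norm_of_nonneg (tent_nonneg x)]
    exact tent_le_one hδ x

theorem measureReal_singleton_le_integral_tent (hδ : 0 < δ) : m.real {0} ≤ ∫ x, tent δ x ∂m := by
  rw [← integral_indicator_one (measurableSet_singleton 0)]
  exact integral_mono ((integrable_const 1).indicator (measurableSet_singleton 0))
    (integrable_tent m hδ.le) indicator_singleton_le_tent

theorem integral_tent_le_measureReal_Icc (hδ : 0 < δ) :
    ∫ x, tent δ x ∂m ≤ m.real (Icc (-δ) δ) := by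
  rw [← integral_indicator_one measurableSet_Icc]
  exact integral_mono (integrable_tent m hδ.le) ((integrable_const 1).indicator measurableSet_Icc)
    (tent_le_indicator_Icc hδ)

theorem tendsto_integral_tent : Tendsto (fun δ => ∫ x, tent δ x ∂m) (𝓝[>] 0) (𝓝 (m.real {0})) := by
  have hIcc : Tendsto (fun δ => m.real (Icc (-δ) δ)) (𝓝[>] 0) (𝓝 (m.real {0})) := by
    simpa [Function.comp_def, measureReal_def] using (ENNReal.tendsto_toReal
      (measure_ne_top m {0})).comp (tendsto_measure_Icc_nhdsWithin_right' m 0)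
  refine tendsto_of_tendsto_of_tendsto_of_le_of_le' tendsto_const_nhds hIcc ?_ ?_ <;>
    filter_upwards [self_mem_nhdsWithin] with δ hδ
  · exact measureReal_singleton_le_integral_tent m hδ
  · exact integral_tent_le_measureReal_Icc m hδ

theorem abs_setIntegral_tent_sub_measureReal_le {K : ℝ} (hK : 0 ≤ K) (hδ : 0 < δ) :
    |∫ x in Icc 0 K, tent δ x ∂m - m.real {0}| ≤ m.real (Ioc 0 δ) := by
  have hatom := measureReal_restrict_singleton_of_mem m (show (0 : ℝ) ∈ Icc 0 K from ⟨le_rfl, hK⟩)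
  have hIcc : (m.restrict (Icc 0 K)).real (Icc (-δ) δ) ≤ m.real {0} + m.real (Ioc 0 δ) :=
    calc (m.restrict (Icc 0 K)).real (Icc (-δ) δ)
        = m.real (Icc (-δ) δ ∩ Icc 0 K) := measureReal_restrict_apply measurableSet_Icc
      _ ≤ m.real (Icc 0 δ) := measureReal_mono fun x hx => ⟨hx.2.1, hx.1.2⟩
      _ = m.real ({0} ∪ Ioc 0 δ) := by rw [← insert_eq, Ioc_insert_left hδ.le]
      _ ≤ m.real {0} + m.real (Ioc 0 δ) := measureReal_union_le _ _
  have hlower := measureReal_singleton_le_integral_tent (m.restrict (Icc 0 K)) hδ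
  have hupper := integral_tent_le_measureReal_Icc (m.restrict (Icc 0 K)) hδ
  rw [abs_le]
  constructor <;> linarith

end Tent

section LogMass

variable (m : Measure ℝ)

theorem integrableOn_log_Ioc [IsFiniteMeasure m] {a b : ℝ} (ha : 0 < a) :
    IntegrableOn log (Ioc a b) m :=
  ((continuousOn_log.mono fun _ hx => (ha.trans_le hx.1).ne').integrableOn_compact
    isCompact_Icc).mono_set Ioc_subset_Icc_self

theorem setIntegral_log_Ioc_le [IsFiniteMeasure m] {a b : ℝ} (ha : 0 < a) :
    ∫ x in Ioc a b, log x ∂m ≤ log b * m.real (Ioc a b) :=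
  calc ∫ x in Ioc a b, log x ∂m
      ≤ ∫ _ in Ioc a b, log b ∂m :=
        setIntegral_mono_on (integrableOn_log_Ioc m ha) (integrableOn_const (measure_ne_top _ _))
          measurableSet_Ioc fun x hx => log_le_log (ha.trans hx.1) hx.2
    _ = log b * m.real (Ioc a b) := by rw [setIntegral_const, smul_eq_mul, mul_comm]

variable [IsProbabilityMeasure m]

theorem setIntegral_log_Ioc_le_log_mul_add {K ε δ : ℝ} (hK : 1 ≤ K) (hε : 0 < ε) (hεδ : ε ≤ δ)
    (hδK : δ ≤ K) : ∫ x in Ioc ε K, log x ∂m ≤ log δ * m.real (Ioc ε δ) + log K := by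
  have hδ : 0 < δ := hε.trans_le hεδ
  rw [← Ioc_union_Ioc_eq_Ioc hεδ hδK, setIntegral_union (Ioc_disjoint_Ioc_of_le le_rfl)
    measurableSet_Ioc (integrableOn_log_Ioc m hε) (integrableOn_log_Ioc m hδ)]
  have hnear := setIntegral_log_Ioc_le m hε (b := δ)
  have hfar := setIntegral_log_Ioc_le m hδ (b := K)
  have hmass : log K * m.real (Ioc δ K) ≤ log K :=
    mul_le_of_le_one_right (log_nonneg hK) measureReal_le_one
  linarith

theorem tendsto_measureReal_Ioc_nhdsGT {a b : ℝ} (hab : a < b) :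
    Tendsto (fun ε => m.real (Ioc ε b)) (𝓝[>] a) (𝓝 (m.real (Ioc a b))) := by
  have hcdf : Tendsto (fun ε => m.real (Iic ε)) (𝓝[>] a) (𝓝 (m.real (Iic a))) := by
    simpa only [funext (ProbabilityTheory.cdf_eq_real m)] using
      (((ProbabilityTheory.cdf m).right_continuous a).mono Ioi_subset_Ici_self).tendsto
  have hdiff : ∀ x ≤ b, m.real (Ioc x b) = m.real (Iic b) - m.real (Iic x) := fun x hx => by
    rw [← Iic_sdiff_Iic, measureReal_sdiff (Iic_subset_Iic.2 hx) measurableSet_Iic]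
  rw [hdiff a hab.le]
  refine (tendsto_const_nhds.sub hcdf).congr' ?_
  filter_upwards [Ioo_mem_nhdsGT hab] with x hx using (hdiff x hx.2.le).symm

theorem measureReal_Ioc_zero_mul_neg_log_le {K c δ : ℝ} (hK : 1 ≤ K)
    (hc : Tendsto (fun ε => ∫ x in Ioc ε K, log x ∂m) (𝓝[>] 0) (𝓝 c)) (hc0 : 0 ≤ c)
    (hδ : 0 < δ) (hδK : δ ≤ K) : m.real (Ioc 0 δ) * -log δ ≤ log K := by
  have : c ≤ log δ * m.real (Ioc 0 δ) + log K := by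
    refine le_of_tendsto_of_tendsto hc
      (((tendsto_measureReal_Ioc_nhdsGT m hδ).const_mul _).add_const _) ?_
    filter_upwards [Ioo_mem_nhdsGT hδ] with ε hε
    exact setIntegral_log_Ioc_le_log_mul_add m hK hε.1 hε.2.le hδK
  linarith

end LogMass

theorem tendstoUniformly_setIntegral_tent {ι : Type*} {K : ℝ} (hK : 1 ≤ K) (μ : ι → Measure ℝ)
    [∀ i, IsProbabilityMeasure (μ i)] (c : ι → ℝ)
    (hc : ∀ i, Tendsto (fun ε => ∫ x in Ioc ε K, log x ∂μ i) (𝓝[>] 0) (𝓝 (c i)))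
    (hc0 : ∀ i, 0 ≤ c i) :
    TendstoUniformly (fun δ i => ∫ x in Icc 0 K, tent δ x ∂μ i) (fun i => (μ i).real {0})
      (𝓝[>] 0) := by
  have hbound : ∀ δ ∈ Ioo (0 : ℝ) 1, ∀ i,
      dist ((μ i).real {0}) (∫ x in Icc 0 K, tent δ x ∂μ i) ≤ log K / -log δ := by
    intro δ hδ i
    rw [dist_comm, Real.dist_eq, le_div_iff₀ (neg_pos.2 (log_neg hδ.1 hδ.2))]
    exact (mul_le_mul_of_nonneg_right
      (abs_setIntegral_tent_sub_measureReal_le (μ i) (by linarith) hδ.1)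
      (neg_nonneg.2 (log_nonpos hδ.1.le hδ.2.le))).trans
      (measureReal_Ioc_zero_mul_neg_log_le (μ i) hK (hc i) (hc0 i) hδ.1 (by linarith [hδ.2]))
  have hlim : Tendsto (fun δ => log K / -log δ) (𝓝[>] 0) (𝓝 0) :=
    tendsto_const_nhds.div_atTop (tendsto_neg_atBot_atTop.comp tendsto_log_nhdsGT_zero)
  rw [Metric.tendstoUniformly_iff]
  intro ε hε
  filter_upwards [hlim.eventually (gt_mem_nhds hε), Ioo_mem_nhdsGT one_pos] with δ hδε hδ i
  exact (hbound δ hδ i).trans_lt hδε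

theorem betti_weak_convergence_atom_at_zero_general
    (K : ℝ) (hK : 1 ≤ K)
    (μ : ℕ → Measure ℝ) (ν : Measure ℝ)
    (hμprob : ∀ n, IsProbabilityMeasure (μ n))
    (hνprob : IsProbabilityMeasure ν)
    (hweak : ∀ f : ℝ → ℝ, ContinuousOn f (Set.Icc 0 K) →
      Filter.Tendsto (fun n => ∫ x in Set.Icc 0 K, f x ∂(μ n)) Filter.atTop
        (nhds (∫ x in Set.Icc 0 K, f x ∂ν)))
    (c : ℕ → ℝ)
    (hc : ∀ n, Filter.Tendsto (fun ε : ℝ => ∫ x in Set.Ioc ε K, Real.log x ∂(μ n))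
      (nhdsWithin 0 (Set.Ioi 0)) (nhds (c n)))
    (hc0 : ∀ n, 0 ≤ c n) :
    Filter.Tendsto (fun n => ((μ n) {0}).toReal) Filter.atTop (nhds ((ν {0}).toReal)) := by
  have hνlim := tendsto_integral_tent (ν.restrict (Icc 0 K))
  rw [measureReal_restrict_singleton_of_mem ν (show (0 : ℝ) ∈ Icc 0 K from ⟨le_rfl, by linarith⟩)]
    at hνlim
  exact (tendstoUniformly_setIntegral_tent hK μ c hc hc0).tendsto_of_eventually_tendsto
    (Eventually.of_forall fun δ => hweak _ (continuous_tent δ).continuousOn) hνlim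

/-- If probability measures `μ n` on `[0, K]` (with `K ≥ 1`) converge weakly to `ν`, and for
every `n` the limit `c n = lim_{ε→0⁺} ∫_{(ε,K]} log λ dμ_n(λ)` exists and is nonnegative,
then `μ_n({0}) → ν({0})`. -/
theorem betti_weak_convergence_atom_at_zero
    (K : ℝ) (hK : 1 ≤ K)
    (μ : ℕ → Measure ℝ) (ν : Measure ℝ)
    (hμprob : ∀ n, IsProbabilityMeasure (μ n))
    (hνprob : IsProbabilityMeasure ν)
    (hμsupp : ∀ n, (μ n) (Set.Icc 0 K)ᶜ = 0)
    (hνsupp : ν (Set.Icc 0 K)ᶜ = 0)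
    (hweak : ∀ f : ℝ → ℝ, ContinuousOn f (Set.Icc 0 K) →
      Filter.Tendsto (fun n => ∫ x in Set.Icc 0 K, f x ∂(μ n)) Filter.atTop
        (nhds (∫ x in Set.Icc 0 K, f x ∂ν)))
    (c : ℕ → ℝ)
    (hc : ∀ n, Filter.Tendsto (fun ε : ℝ => ∫ x in Set.Ioc ε K, Real.log x ∂(μ n))
      (nhdsWithin 0 (Set.Ioi 0)) (nhds (c n)))
    (hc0 : ∀ n, 0 ≤ c n) :
    Filter.Tendsto (fun n => ((μ n) {0}).toReal) Filter.atTop (nhds ((ν {0}).toReal)) :=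
  betti_weak_convergence_atom_at_zero_general K hK μ ν hμprob hνprob hweak c hc hc0
end

section
/- Let K ≥ 1 and let μ be a Borel probability measure on [0, K] with distribution function σ(λ) := μ([0, λ]). Suppose the limit c(μ) := lim_{ε→0⁺} ∫_{(ε,K]} log λ dμ(λ) exists as a real number. Then the function λ ↦ (σ(λ) − σ(0))/λ is Lebesgue integrable on (0, K] and c(μ) = (log K)·(1 − σ(0)) − ∫_0^K (σ(λ) − σ(0))/λ dλ. -/
/-!
By Tonelli, `∫_(0,K] μ(0,t] / t dt = ∫_(0,K] (log K - log x) dμ(x)`, both sides being the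
integral of `1_{x ≤ t} / t` over `(0,K]²`. The integrand `log K - log x` is nonnegative on `(0,K]`,
so its integral is the limit of the truncated integrals
`∫_(ε,K] (log K - log x) dμ = log K · μ(ε,K] - ∫_(ε,K] log dμ`, which tend to
`log K · (1 - σ(0)) - c`. Finally `σ(t) - σ(0) = μ(0,t]`.
-/

open MeasureTheory Filter Set Topology

lemma measureReal_Icc_sub_measureReal_Icc (μ : Measure ℝ) [IsFiniteMeasure μ] {a b c : ℝ}
    (hab : a ≤ b) (hbc : b ≤ c) : μ.real (Icc a c) - μ.real (Icc a b) = μ.real (Ioc b c) := by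
  rw [← Icc_union_Ioc_eq_Icc hab hbc,
    measureReal_union ((Iic_disjoint_Ioc le_rfl).mono_left Icc_subset_Iic_self) measurableSet_Ioc]
  ring

lemma aecover_Ioc_nhdsGT {α : Type*} [LinearOrder α] [TopologicalSpace α] [OrderTopology α]
    [MeasurableSpace α] [OpensMeasurableSpace α] (μ : Measure α) (a b : α) :
    AECover (μ.restrict (Ioc a b)) (𝓝[>] a) fun ε => Ioc ε b where
  ae_eventually_mem := (ae_restrict_mem measurableSet_Ioc).mono fun _ hx =>
    (eventually_nhdsWithin_of_eventually_nhds (eventually_lt_nhds hx.1)).mono fun _ hε =>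
      ⟨hε, hx.2⟩
  measurableSet _ := measurableSet_Ioc

lemma tendsto_setIntegral_Ioc_nhdsGT {α E : Type*} [LinearOrder α] [TopologicalSpace α]
    [OrderTopology α] [FirstCountableTopology α] [MeasurableSpace α] [OpensMeasurableSpace α]
    [NormedAddCommGroup E] [NormedSpace ℝ E] {μ : Measure α} {f : α → E} {a b : α}
    (hf : IntegrableOn f (Ioc a b) μ) :
    Tendsto (fun ε => ∫ x in Ioc ε b, f x ∂μ) (𝓝[>] a) (𝓝 (∫ x in Ioc a b, f x ∂μ)) := by
  refine ((aecover_Ioc_nhdsGT μ a b).integral_tendsto_of_countably_generated hf).congr' ?_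
  filter_upwards [self_mem_nhdsWithin] with ε hε
  rw [Measure.restrict_restrict_of_subset (Ioc_subset_Ioc_left (le_of_lt hε))]

lemma integrableOn_Ioc_and_setIntegral_eq_of_tendsto_of_nonneg {μ : Measure ℝ} {f : ℝ → ℝ}
    {a b L : ℝ} (hf : ∀ x ∈ Ioc a b, 0 ≤ f x) (hfi : ∀ ε > a, IntegrableOn f (Ioc ε b) μ)
    (hL : Tendsto (fun ε => ∫ x in Ioc ε b, f x ∂μ) (𝓝[>] a) (𝓝 L)) :
    IntegrableOn f (Ioc a b) μ ∧ ∫ x in Ioc a b, f x ∂μ = L := by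
  obtain ⟨u, -, hua, hu⟩ := exists_seq_strictAnti_tendsto_nhdsWithin a
  have hcover := (aecover_Ioc_nhdsGT μ a b).comp_tendsto hu
  have hrestrict : ∀ n, (μ.restrict (Ioc a b)).restrict (Ioc (u n) b) = μ.restrict (Ioc (u n) b) :=
    fun n => Measure.restrict_restrict_of_subset (Ioc_subset_Ioc_left (hua n).le)
  have hfi' : ∀ n, IntegrableOn f (Ioc (u n) b) (μ.restrict (Ioc a b)) := fun n => by
    rw [IntegrableOn, hrestrict]
    exact hfi _ (hua n)
  have hL' : Tendsto (fun n => ∫ x in Ioc (u n) b, f x ∂(μ.restrict (Ioc a b))) atTop (𝓝 L) :=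
    (hL.comp hu).congr fun n => by simp only [Function.comp_apply, hrestrict]
  have hnonneg : 0 ≤ᵐ[μ.restrict (Ioc a b)] f := (ae_restrict_mem measurableSet_Ioc).mono hf
  have hint := hcover.integrable_of_integral_tendsto_of_nonneg_ae L hfi' hnonneg hL'
  exact ⟨hint, hcover.integral_eq_of_tendsto L hint hL'⟩

lemma integrableOn_log_Ioc_s4 (μ : Measure ℝ) [IsFiniteMeasureOnCompacts μ] {a b : ℝ} (ha : 0 < a) :
    IntegrableOn Real.log (Ioc a b) μ :=
  ((Real.continuousOn_log.mono fun _ hx => (ha.trans_le hx.1).ne').integrableOn_Icc).mono_set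
    Ioc_subset_Icc_self

lemma lintegral_Icc_ofReal_inv {a b : ℝ} (ha : 0 < a) (hab : a ≤ b) :
    ∫⁻ t in Icc a b, ENNReal.ofReal t⁻¹ = ENNReal.ofReal (Real.log b - Real.log a) := by
  rw [Measure.restrict_congr_set Ioc_ae_eq_Icc.symm, ← ofReal_integral_eq_lintegral_ofReal,
    ← intervalIntegral.integral_of_le hab, integral_inv_of_pos ha (ha.trans_le hab),
    Real.log_div (ha.trans_le hab).ne' ha.ne']
  · exact (intervalIntegrable_iff_integrableOn_Ioc_of_le hab).1
      (intervalIntegral.intervalIntegrable_inv (fun t ht => by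
        rw [uIcc_of_le hab] at ht; exact (ha.trans_le ht.1).ne') continuousOn_id)
  · exact (ae_restrict_mem measurableSet_Ioc).mono fun t ht => (inv_pos.2 (ha.trans ht.1)).le

lemma lintegral_measure_Ioc_mul_inv_eq_lintegral_log (μ : Measure ℝ) [SFinite μ] (K : ℝ) :
    ∫⁻ t in Ioc 0 K, μ (Ioc 0 t) * ENNReal.ofReal t⁻¹
      = ∫⁻ x in Ioc 0 K, ENNReal.ofReal (Real.log K - Real.log x) ∂μ := by
  set S : Set (ℝ × ℝ) := {p | p.1 ≤ p.2}
  set F : ℝ × ℝ → ENNReal := S.indicator fun p => ENNReal.ofReal p.2⁻¹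
  have hF : Measurable F := (measurable_snd.inv.ennreal_ofReal).indicator
    (measurableSet_le measurable_fst measurable_snd)
  have inner_t : ∀ x ∈ Ioc 0 K,
      ∫⁻ t in Ioc 0 K, F (x, t) = ENNReal.ofReal (Real.log K - Real.log x) := by
    intro x hx
    have hIcc : Ici x ∩ Ioc 0 K = Icc x K := by
      ext t
      exact ⟨fun ⟨hxt, _, htK⟩ => ⟨hxt, htK⟩, fun ⟨hxt, htK⟩ => ⟨hxt, hx.1.trans_le hxt, htK⟩⟩
    have hF_x : (fun t => F (x, t)) = (Ici x).indicator fun t => ENNReal.ofReal t⁻¹ := by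
      ext t; simp [F, S, indicator_apply]
    rw [hF_x, lintegral_indicator measurableSet_Ici, Measure.restrict_restrict measurableSet_Ici,
      hIcc, lintegral_Icc_ofReal_inv hx.1 hx.2]
  have inner_x : ∀ t ∈ Ioc 0 K,
      ∫⁻ x in Ioc 0 K, F (x, t) ∂μ = μ (Ioc 0 t) * ENNReal.ofReal t⁻¹ := by
    intro t ht
    have hF_t : (fun x => F (x, t)) = (Iic t).indicator fun _ => ENNReal.ofReal t⁻¹ := by
      ext x; simp [F, S, indicator_apply]
    rw [hF_t, lintegral_indicator_const measurableSet_Iic, Measure.restrict_apply measurableSet_Iic,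
      Iic_inter_Ioc_of_le ht.2, mul_comm]
  calc ∫⁻ t in Ioc 0 K, μ (Ioc 0 t) * ENNReal.ofReal t⁻¹
      = ∫⁻ t in Ioc 0 K, ∫⁻ x in Ioc 0 K, F (x, t) ∂μ :=
        (setLIntegral_congr_fun measurableSet_Ioc inner_x).symm
    _ = ∫⁻ x in Ioc 0 K, (∫⁻ t in Ioc 0 K, F (x, t)) ∂μ := by
        apply lintegral_lintegral_swap
        exact (hF.comp measurable_swap).aemeasurable
    _ = _ := setLIntegral_congr_fun measurableSet_Ioc inner_t

lemma integrableOn_measureReal_Ioc_div_and_setIntegral_eq (μ : Measure ℝ) [IsFiniteMeasure μ]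
    (K : ℝ) (hlog : IntegrableOn (fun x => Real.log K - Real.log x) (Ioc 0 K) μ) :
    IntegrableOn (fun t => μ.real (Ioc 0 t) / t) (Ioc 0 K) ∧
      ∫ t in Ioc 0 K, μ.real (Ioc 0 t) / t = ∫ x in Ioc 0 K, (Real.log K - Real.log x) ∂μ := by
  have hmeas : Measurable fun t => μ.real (Ioc 0 t) / t :=
    (Monotone.measurable fun _ _ h => measureReal_mono (Ioc_subset_Ioc_right h)).div measurable_id
  have hnonneg : 0 ≤ᵐ[volume.restrict (Ioc 0 K)] fun t => μ.real (Ioc 0 t) / t :=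
    (ae_restrict_mem measurableSet_Ioc).mono fun t ht => div_nonneg measureReal_nonneg ht.1.le
  have hlog_nonneg : 0 ≤ᵐ[μ.restrict (Ioc 0 K)] fun x => Real.log K - Real.log x :=
    (ae_restrict_mem measurableSet_Ioc).mono fun x hx =>
      sub_nonneg.2 (Real.log_le_log hx.1 hx.2)
  have hlintegral : ∫⁻ t in Ioc 0 K, ENNReal.ofReal (μ.real (Ioc 0 t) / t)
      = ∫⁻ x in Ioc 0 K, ENNReal.ofReal (Real.log K - Real.log x) ∂μ := by
    rw [← lintegral_measure_Ioc_mul_inv_eq_lintegral_log]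
    refine setLIntegral_congr_fun measurableSet_Ioc fun t ht => ?_
    rw [div_eq_mul_inv, ENNReal.ofReal_mul measureReal_nonneg, measureReal_def,
      ENNReal.ofReal_toReal (measure_ne_top _ _)]
  have hint : IntegrableOn (fun t => μ.real (Ioc 0 t) / t) (Ioc 0 K) :=
    ⟨hmeas.aestronglyMeasurable, (hasFiniteIntegral_iff_ofReal hnonneg).2
      (hlintegral ▸ (hasFiniteIntegral_iff_ofReal hlog_nonneg).1 hlog.hasFiniteIntegral)⟩
  refine ⟨hint, ?_⟩
  rw [integral_eq_lintegral_of_nonneg_ae hnonneg hmeas.aestronglyMeasurable,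
    integral_eq_lintegral_of_nonneg_ae hlog_nonneg hlog.aestronglyMeasurable, hlintegral]

/-- If `μ` is a probability measure on `[0, K]` (with `K ≥ 1`) whose distribution function
is `σ`, and the limit `c = lim_{ε→0⁺} ∫_{(ε,K]} log λ dμ(λ)` exists, then
`λ ↦ (σ(λ) - σ(0))/λ` is Lebesgue integrable on `(0, K]` and
`c = log K · (1 - σ(0)) - ∫_0^K (σ(λ) - σ(0))/λ dλ`. -/
theorem log_moment_integral_formula
    (K : ℝ) (hK : 1 ≤ K)
    (μ : Measure ℝ) (hμprob : IsProbabilityMeasure μ)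
    (hμsupp : μ (Set.Icc 0 K)ᶜ = 0)
    (σ : ℝ → ℝ) (hσ : ∀ lam, σ lam = (μ (Set.Icc 0 lam)).toReal)
    (c : ℝ)
    (hc : Filter.Tendsto (fun ε : ℝ => ∫ x in Set.Ioc ε K, Real.log x ∂μ)
      (nhdsWithin 0 (Set.Ioi 0)) (nhds c)) :
    MeasureTheory.IntegrableOn (fun lam => (σ lam - σ 0) / lam) (Set.Ioc 0 K) volume ∧
    c = Real.log K * (1 - σ 0) - ∫ lam in Set.Ioc 0 K, (σ lam - σ 0) / lam := by
  have := hμprob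
  have hσ_sub : ∀ t, 0 ≤ t → σ t - σ 0 = μ.real (Ioc 0 t) := fun t ht => by
    rw [hσ, hσ]
    exact measureReal_Icc_sub_measureReal_Icc μ le_rfl ht
  have hmass : μ.real (Ioc 0 K) = 1 - σ 0 := by
    rw [← hσ_sub K (zero_le_one.trans hK), hσ K,
      (prob_compl_eq_zero_iff measurableSet_Icc).1 hμsupp, ENNReal.toReal_one]
  have hlog_int : ∀ ε > 0, IntegrableOn (fun x => Real.log K - Real.log x) (Ioc ε K) μ :=
    fun ε hε => (integrable_const _).sub (integrableOn_log_Ioc_s4 μ hε)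
  have hlog_tendsto : Tendsto (fun ε => ∫ x in Ioc ε K, (Real.log K - Real.log x) ∂μ) (𝓝[>] 0)
      (𝓝 ((∫ _ in Ioc 0 K, Real.log K ∂μ) - c)) := by
    refine ((tendsto_setIntegral_Ioc_nhdsGT (integrable_const _)).sub hc).congr' ?_
    filter_upwards [self_mem_nhdsWithin] with ε hε
    rw [integral_sub (integrable_const _) (integrableOn_log_Ioc_s4 μ hε)]
  obtain ⟨hlog, hlog_eq⟩ := integrableOn_Ioc_and_setIntegral_eq_of_tendsto_of_nonneg
    (fun x hx => sub_nonneg.2 (Real.log_le_log hx.1 hx.2)) hlog_int hlog_tendsto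
  obtain ⟨hint, hint_eq⟩ := integrableOn_measureReal_Ioc_div_and_setIntegral_eq μ K hlog
  have hcongr : EqOn (fun t => (σ t - σ 0) / t) (fun t => μ.real (Ioc 0 t) / t) (Ioc 0 K) :=
    fun t ht => by dsimp only; rw [hσ_sub t ht.1.le]
  refine ⟨hint.congr_fun hcongr.symm measurableSet_Ioc, ?_⟩
  rw [setIntegral_congr_fun measurableSet_Ioc hcongr, hint_eq, hlog_eq, setIntegral_const,
    smul_eq_mul, hmass]
  ring
end

section
/- Let K ≥ 1 and let μ be a Borel probability measure on [0, K] with distribution function σ(λ) := μ([0, λ]). Suppose the limit c(μ) := lim_{ε→0⁺} ∫_{(ε,K]} log λ dμ(λ) exists and satisfies c(μ) ≥ 0. Then ∫_0^K (σ(λ) − σ(0))/λ dλ ≤ log K. -/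
/-!
Since `σ(λ) - σ(0) = μ((0, λ])`, Tonelli turns the left-hand side into
`∫_{(0,K]} (log K - log x) dμ(x)`, because `∫_x^K dλ/λ = log K - log x`. By monotone convergence
over the intervals `(ε, K]` this equals `log K · μ((0, K]) - c`, which is at most `log K` since
`μ((0, K]) ≤ 1`, `log K ≥ 0` and `c ≥ 0`.
-/

open MeasureTheory Filter Set Real Topology
open scoped ENNReal

section IntervalLimits

variable {α : Type*} [LinearOrder α] [TopologicalSpace α] [OrderTopology α] [DenselyOrdered α]
  [FirstCountableTopology α] [MeasurableSpace α]

lemma tendsto_measure_Ioc_nhdsGT (μ : Measure α) (a b : α) :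
    Tendsto (fun ε => μ (Ioc ε b)) (𝓝[>] a) (𝓝 (μ (Ioc a b))) := by
  have : (atBot : Filter (Ioi a)).IsCountablyGenerated := by
    rw [← comap_coe_Ioi_nhdsGT a]
    infer_instance
  have hunion : ⋃ ε : Ioi a, Ioc (ε : α) b = Ioc a b := by
    ext x
    simp only [mem_iUnion, mem_Ioc, Subtype.exists, mem_Ioi, exists_prop]
    constructor
    · rintro ⟨ε, hε, hεx, hxb⟩
      exact ⟨hε.trans hεx, hxb⟩
    · rintro ⟨hax, hxb⟩
      obtain ⟨ε, haε, hεx⟩ := exists_between hax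
      exact ⟨ε, haε, hεx, hxb⟩
  rw [← map_coe_Ioi_atBot a, tendsto_map'_iff, ← hunion]
  exact tendsto_measure_iUnion_atBot fun ε δ h => Ioc_subset_Ioc_left h

lemma setLIntegral_Ioc_eq_ofReal_of_tendsto [OpensMeasurableSpace α] [NoMaxOrder α]
    {μ : Measure α} {g : α → ℝ} {a b : α} {L : ℝ}
    (hg : ∀ x ∈ Ioc a b, 0 ≤ g x) (hint : ∀ ε > a, IntegrableOn g (Ioc ε b) μ)
    (hlim : Tendsto (fun ε => ∫ x in Ioc ε b, g x ∂μ) (𝓝[>] a) (𝓝 L)) :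
    ∫⁻ x in Ioc a b, ENNReal.ofReal (g x) ∂μ = ENNReal.ofReal L := by
  have hmeas := tendsto_measure_Ioc_nhdsGT (μ.withDensity fun x => ENNReal.ofReal (g x)) a b
  simp only [withDensity_apply _ measurableSet_Ioc] at hmeas
  refine tendsto_nhds_unique hmeas (((ENNReal.continuous_ofReal.tendsto L).comp hlim).congr' ?_)
  filter_upwards [self_mem_nhdsWithin] with ε (hε : a < ε)
  refine ofReal_integral_eq_lintegral_ofReal (hint ε hε) ?_
  filter_upwards [ae_restrict_mem measurableSet_Ioc] with x hx
  exact hg x ⟨hε.trans hx.1, hx.2⟩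

end IntervalLimits

lemma integrableOn_log_Ioc_s5 (μ : Measure ℝ) [IsFiniteMeasure μ] {ε : ℝ} (hε : 0 < ε) (b : ℝ) :
    IntegrableOn log (Ioc ε b) μ :=
  (continuousOn_log.mono fun _ hx => (hε.trans_le hx.1).ne').integrableOn_Icc.mono_set
    Ioc_subset_Icc_self

lemma setLIntegral_Icc_ofReal_inv {x K : ℝ} (hx : 0 < x) (hxK : x ≤ K) :
    ∫⁻ t in Icc x K, ENNReal.ofReal t⁻¹ = ENNReal.ofReal (log K - log x) := by
  have hpos : ∀ t ∈ Icc x K, 0 < t := fun t ht => hx.trans_le ht.1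
  have hint : IntegrableOn (fun t : ℝ => t⁻¹) (Icc x K) :=
    (continuousOn_inv₀.mono fun t ht => (hpos t ht).ne').integrableOn_Icc
  rw [← ofReal_integral_eq_lintegral_ofReal hint, integral_Icc_eq_integral_Ioc,
    ← intervalIntegral.integral_of_le hxK, integral_inv_of_pos hx (hx.trans_le hxK),
    log_div (hx.trans_le hxK).ne' hx.ne']
  filter_upwards [ae_restrict_mem measurableSet_Icc] with t ht
  exact (inv_pos.2 (hpos t ht)).le

lemma setLIntegral_indicator_Ioc_ofReal_inv (K x : ℝ) :
    ∫⁻ t in Ioc 0 K, (Ioc 0 t).indicator (fun _ => ENNReal.ofReal t⁻¹) x =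
      (Ioc 0 K).indicator (fun x => ENNReal.ofReal (log K - log x)) x := by
  by_cases hx : x ∈ Ioc 0 K
  · have hfiber : ∀ t, (Ioc 0 t).indicator (fun _ => ENNReal.ofReal t⁻¹) x =
        (Ici x).indicator (fun t => ENNReal.ofReal t⁻¹) t := by
      intro t
      by_cases hxt : x ≤ t <;> simp [indicator, hxt, hx.1]
    have hinter : Ici x ∩ Ioc 0 K = Icc x K := by
      ext t
      simp only [mem_inter_iff, mem_Ici, mem_Ioc, mem_Icc]
      exact ⟨fun h => ⟨h.1, h.2.2⟩, fun h => ⟨h.1, hx.1.trans_le h.1, h.2⟩⟩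
    simp_rw [hfiber]
    rw [lintegral_indicator measurableSet_Ici, Measure.restrict_restrict measurableSet_Ici,
      hinter, setLIntegral_Icc_ofReal_inv hx.1 hx.2, indicator_of_mem hx]
  · rw [indicator_of_notMem hx]
    refine (setLIntegral_congr_fun measurableSet_Ioc fun t ht => ?_).trans lintegral_zero
    exact indicator_of_notMem (fun hxt => hx ⟨hxt.1, hxt.2.trans ht.2⟩) _

lemma setLIntegral_measure_Ioc_mul_ofReal_inv (μ : Measure ℝ) [SFinite μ] (K : ℝ) :
    ∫⁻ t in Ioc 0 K, μ (Ioc 0 t) * ENNReal.ofReal t⁻¹ =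
      ∫⁻ x in Ioc 0 K, ENNReal.ofReal (log K - log x) ∂μ := by
  have hmeas : Measurable (Function.uncurry fun t x : ℝ =>
      (Ioc 0 t).indicator (fun _ => ENNReal.ofReal t⁻¹) x) := by
    change Measurable fun p : ℝ × ℝ =>
      {p : ℝ × ℝ | p.2 ∈ Ioc 0 p.1}.indicator (fun p => ENNReal.ofReal p.1⁻¹) p
    refine measurable_fst.inv.ennreal_ofReal.indicator ?_
    exact (measurableSet_lt measurable_const measurable_snd).inter
      (measurableSet_le measurable_snd measurable_fst)
  calc ∫⁻ t in Ioc 0 K, μ (Ioc 0 t) * ENNReal.ofReal t⁻¹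
      = ∫⁻ t in Ioc 0 K, ∫⁻ x, (Ioc 0 t).indicator (fun _ => ENNReal.ofReal t⁻¹) x ∂μ := by
        simp_rw [lintegral_indicator_const measurableSet_Ioc, mul_comm]
    _ = ∫⁻ x, (∫⁻ t in Ioc 0 K, (Ioc 0 t).indicator (fun _ => ENNReal.ofReal t⁻¹) x) ∂μ :=
        lintegral_lintegral_swap (μ := volume.restrict (Ioc 0 K)) (ν := μ) hmeas.aemeasurable
    _ = ∫⁻ x in Ioc 0 K, ENNReal.ofReal (log K - log x) ∂μ := by
        simp_rw [setLIntegral_indicator_Ioc_ofReal_inv]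
        exact lintegral_indicator measurableSet_Ioc _

lemma measureReal_Icc_sub_measureReal_Icc_self (μ : Measure ℝ) [IsFiniteMeasure μ] {a b : ℝ}
    (hab : a ≤ b) : μ.real (Icc a b) - μ.real (Icc a a) = μ.real (Ioc a b) := by
  rw [Icc_self, ← measureReal_sdiff (singleton_subset_iff.2 (left_mem_Icc.2 hab))
    (measurableSet_singleton a), Icc_sdiff_left]

theorem log_moment_integral_bound_general
    (K : ℝ) (hK : 1 ≤ K)
    (μ : Measure ℝ) (hμprob : IsProbabilityMeasure μ)
    (σ : ℝ → ℝ) (hσ : ∀ lam, σ lam = (μ (Set.Icc 0 lam)).toReal)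
    (c : ℝ)
    (hc : Filter.Tendsto (fun ε : ℝ => ∫ x in Set.Ioc ε K, Real.log x ∂μ)
      (nhdsWithin 0 (Set.Ioi 0)) (nhds c))
    (hc0 : 0 ≤ c) :
    ∫⁻ lam in Set.Ioc 0 K, ENNReal.ofReal ((σ lam - σ 0) / lam) ≤
      ENNReal.ofReal (Real.log K) := by
  have hintegrand : ∀ t ∈ Ioc (0 : ℝ) K,
      ENNReal.ofReal ((σ t - σ 0) / t) = μ (Ioc 0 t) * ENNReal.ofReal t⁻¹ := by
    intro t ht
    rw [hσ, hσ, ← measureReal_def, ← measureReal_def,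
      measureReal_Icc_sub_measureReal_Icc_self μ ht.1.le, div_eq_mul_inv,
      ENNReal.ofReal_mul measureReal_nonneg, measureReal_def, ENNReal.ofReal_toReal
      (measure_ne_top _ _)]
  have hlim : Tendsto (fun ε => ∫ x in Ioc ε K, (log K - log x) ∂μ) (𝓝[>] 0)
      (𝓝 (log K * μ.real (Ioc 0 K) - c)) := by
    have hmass := ((ENNReal.tendsto_toReal (measure_ne_top μ _)).comp
      (tendsto_measure_Ioc_nhdsGT μ 0 K)).const_mul (log K)
    refine (hmass.sub hc).congr' ?_
    filter_upwards [self_mem_nhdsWithin] with ε (hε : 0 < ε)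
    rw [integral_sub (integrable_const _) (integrableOn_log_Ioc_s5 μ hε K), setIntegral_const,
      smul_eq_mul, mul_comm, measureReal_def, Function.comp_apply]
  rw [setLIntegral_congr_fun measurableSet_Ioc hintegrand,
    setLIntegral_measure_Ioc_mul_ofReal_inv,
    setLIntegral_Ioc_eq_ofReal_of_tendsto
      (fun x hx => sub_nonneg.2 (log_le_log hx.1 hx.2))
      (fun ε hε => (integrable_const _).sub (integrableOn_log_Ioc_s5 μ hε K)) hlim]
  refine ENNReal.ofReal_le_ofReal ?_
  linarith [mul_le_of_le_one_right (log_nonneg hK) (measureReal_le_one (μ := μ) (s := Ioc 0 K))]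

/-- If `μ` is a probability measure on `[0, K]` (with `K ≥ 1`) whose distribution function
is `σ`, and the limit `c = lim_{ε→0⁺} ∫_{(ε,K]} log λ dμ(λ)` exists and is nonnegative,
then `∫_0^K (σ(λ) - σ(0))/λ dλ ≤ log K`. -/
theorem log_moment_integral_bound
    (K : ℝ) (hK : 1 ≤ K)
    (μ : Measure ℝ) (hμprob : IsProbabilityMeasure μ)
    (hμsupp : μ (Set.Icc 0 K)ᶜ = 0)
    (σ : ℝ → ℝ) (hσ : ∀ lam, σ lam = (μ (Set.Icc 0 lam)).toReal)
    (c : ℝ)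
    (hc : Filter.Tendsto (fun ε : ℝ => ∫ x in Set.Ioc ε K, Real.log x ∂μ)
      (nhdsWithin 0 (Set.Ioi 0)) (nhds c))
    (hc0 : 0 ≤ c) :
    ∫⁻ lam in Set.Ioc 0 K, ENNReal.ofReal ((σ lam - σ 0) / lam) ≤
      ENNReal.ofReal (Real.log K) :=
  log_moment_integral_bound_general K hK μ hμprob σ hσ c hc hc0
end

section
/- Let A be an n × n symmetric positive semidefinite matrix with integer entries, and let λ₁, …, λ_n be its eigenvalues with multiplicity (all of which are nonnegative reals). Then ∑_{i : λᵢ > 0} log λᵢ ≥ 0. -/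
/-!
The product of the positive eigenvalues of `A` is, up to sign, the coefficient of
`X ^ (n - r)` in the characteristic polynomial, where `r` is the number of positive
eigenvalues. Since `A` has integer entries this coefficient is an integer; being
positive, the product is at least `1`, so its logarithm is nonnegative.
-/

open Matrix Finset Polynomial

theorem Polynomial.coeff_prod_X_sub_C_of_eq_zero_of_notMem {R ι : Type*} [CommRing R]
    [Fintype ι] (f : ι → R) (s : Finset ι) (hs : ∀ i ∉ s, f i = 0) :
    (∏ i, (X - C (f i))).coeff (Fintype.card ι - #s) = (-1) ^ #s * ∏ i ∈ s, f i := by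
  classical
  have hprod : ∏ i, (X - C (f i)) = (∏ i ∈ s, (X - C (f i))) * X ^ #sᶜ := by
    rw [← prod_mul_prod_compl s]
    congr 1
    rw [← prod_const]
    exact prod_congr rfl fun i hi => by rw [hs i (mem_compl.1 hi), map_zero, sub_zero]
  have hcoeff := coeff_mul_X_pow (∏ i ∈ s, (X - C (f i))) #sᶜ 0
  rw [zero_add] at hcoeff
  rw [hprod, ← card_compl, hcoeff, coeff_zero_prod,
    ← prod_const, ← prod_mul_distrib]
  simp

theorem Matrix.exists_intCast_charpoly_coeff {R n : Type*} [CommRing R] [Fintype n]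
    [DecidableEq n] (A : Matrix n n R) (hA : ∀ i j, ∃ z : ℤ, A i j = z) (k : ℕ) :
    ∃ z : ℤ, A.charpoly.coeff k = z := by
  choose B hB using hA
  have hAB : A = (Matrix.of B).map (Int.castRingHom R) := ext hB
  exact ⟨(Matrix.of B).charpoly.coeff k, by rw [hAB, charpoly_map, coeff_map]; rfl⟩

/-- If `A` is a symmetric positive semidefinite integer matrix, then the sum of the
logarithms of its positive eigenvalues (with multiplicity) is nonnegative. -/
theorem sum_log_pos_eigenvalues_nonneg
    (n : ℕ) (A : Matrix (Fin n) (Fin n) ℝ) (hA : A.PosSemidef)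
    (hint : ∀ i j, ∃ z : ℤ, A i j = (z : ℝ)) :
    0 ≤ ∑ i ∈ Finset.univ.filter fun i => 0 < hA.isHermitian.eigenvalues i,
        Real.log (hA.isHermitian.eigenvalues i) := by
  set lam := hA.isHermitian.eigenvalues
  set P := Finset.univ.filter fun i => 0 < lam i
  have hcoeff : A.charpoly.coeff (n - #P) = (-1) ^ #P * ∏ i ∈ P, lam i := by
    have := coeff_prod_X_sub_C_of_eq_zero_of_notMem lam P fun i hi =>
      (hA.eigenvalues_nonneg i).eq_of_not_lt' (by simpa [P] using hi)
    simpa [hA.isHermitian.charpoly_eq] using this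
  obtain ⟨z, hz⟩ := A.exists_intCast_charpoly_coeff hint (n - #P)
  have hprod_pos : 0 < ∏ i ∈ P, lam i := prod_pos fun i hi => (mem_filter.1 hi).2
  have hprod_int : ∏ i ∈ P, lam i = ((-1) ^ #P * z : ℤ) := by
    push_cast
    rw [← hz, hcoeff, ← mul_assoc, ← mul_pow]
    simp
  have hone_le : 1 ≤ ∏ i ∈ P, lam i := by
    rw [hprod_int] at hprod_pos ⊢
    exact_mod_cast (Int.cast_pos.1 hprod_pos : (0 : ℤ) < _)
  rw [← Real.log_prod fun i hi => (mem_filter.1 hi).2.ne']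
  exact Real.log_nonneg hone_le
end
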